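/- arXiv:2202.09656 — 3 statements merged into one kernel-verified Lean document; each statement's English description precedes it below -/
import Mathlib

section
/- Let m ≥ 1 and c₁, c₂ > 0, and let g : ℝ → ℝ satisfy c₁|s|^m ≤ |g(s)| ≤ c₂|s|^m and g(s)s ≥ 0 for all |s| < 1. Define φ(s) = c₁^{−2/(m+1)}(1 + c₂²) s^{2/(m+1)} for s ≥ 0. Then φ(g(s)·s) ≥ |g(s)|² + s² for all |s| < 1. -/
open Real

theorem concave_majorant_superlinear
    (g : ℝ → ℝ) (m c₁ c₂ : ℝ) (hm : 1 ≤ m) (hc₁ : 0 < c₁) (hc₂ : 0 < c₂)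
    (hsign : ∀ s : ℝ, |s| < 1 → 0 ≤ g s * s)
    (hlow : ∀ s : ℝ, |s| < 1 → c₁ * |s| ^ m ≤ |g s|)
    (hup : ∀ s : ℝ, |s| < 1 → |g s| ≤ c₂ * |s| ^ m) :
    ∀ s : ℝ, |s| < 1 →
      c₁ ^ (-(2 / (m + 1))) * (1 + c₂ ^ 2) * (g s * s) ^ (2 / (m + 1)) ≥
        |g s| ^ 2 + s ^ 2 := by
  intro s hs
  set e : ℝ := 2 / (m + 1) with he
  have hm1 : (0:ℝ) < m + 1 := by linarith
  have he_pos : 0 < e := by positivity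
  rcases eq_or_ne s 0 with rfl | hs0
  · have hg0 : |g 0| ≤ 0 := by
      have := hup 0 (by simp)
      simpa [Real.zero_rpow (by linarith : m ≠ 0)] using this
    have hg0' : g 0 = 0 := abs_nonpos_iff.mp hg0
    simp [hg0', Real.zero_rpow (ne_of_gt he_pos)]
  · have hsabs : 0 < |s| := abs_pos.mpr hs0
    have hprod : g s * s = |g s| * |s| := by
      rw [← abs_mul]; exact (abs_of_nonneg (hsign s hs)).symm
    have hlow' := hlow s hs
    have hkey : c₁ * |s| ^ (m + 1) ≤ g s * s := by
      rw [hprod, Real.rpow_add hsabs, Real.rpow_one, ← mul_assoc]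
      exact mul_le_mul_of_nonneg_right hlow' (le_of_lt hsabs)
    have h1 : (c₁ * |s| ^ (m+1)) ^ e ≤ (g s * s) ^ e :=
      Real.rpow_le_rpow (by positivity) hkey he_pos.le
    have h2 : (c₁ * |s| ^ (m+1)) ^ e = c₁ ^ e * |s| ^ 2 := by
      rw [Real.mul_rpow hc₁.le (by positivity), ← Real.rpow_natCast (|s|) 2,
        ← Real.rpow_mul (abs_nonneg s)]
      congr 1
      rw [he]
      field_simp
      norm_num
    have hfac : c₁ ^ (-e) * c₁ ^ e = 1 := by
      rw [← Real.rpow_add hc₁]; simp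
    have hgs : |g s| ≤ c₂ * |s| := by
      calc |g s| ≤ c₂ * |s| ^ m := hup s hs
        _ ≤ c₂ * |s| := by
          have h : |s| ^ m ≤ |s| ^ (1:ℝ) :=
            Real.rpow_le_rpow_of_exponent_ge hsabs hs.le hm
          rw [Real.rpow_one] at h
          exact mul_le_mul_of_nonneg_left h hc₂.le
    have hg2 : |g s| ^ 2 ≤ c₂ ^ 2 * s ^ 2 := by
      have h := mul_self_le_mul_self (abs_nonneg (g s)) hgs
      calc |g s| ^ 2 = |g s| * |g s| := by ring
        _ ≤ (c₂ * |s|) * (c₂ * |s|) := h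
        _ = c₂ ^ 2 * s ^ 2 := by rw [← sq_abs s]; ring
    calc c₁ ^ (-e) * (1 + c₂ ^ 2) * (g s * s) ^ e
        ≥ c₁ ^ (-e) * (1 + c₂ ^ 2) * (c₁ ^ e * |s| ^ 2) := by
          apply mul_le_mul_of_nonneg_left (h2 ▸ h1)
          positivity
      _ = (1 + c₂ ^ 2) * s ^ 2 := by
          rw [sq_abs]
          calc c₁ ^ (-e) * (1 + c₂^2) * (c₁ ^ e * s ^ 2)
              = (c₁ ^ (-e) * c₁ ^ e) * ((1 + c₂^2) * s^2) := by ring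
            _ = (1 + c₂^2) * s^2 := by rw [hfac, one_mul]
      _ ≥ |g s| ^ 2 + s ^ 2 := by nlinarith
end

section
/- Let 0 < κ < 1 and c₁, c₂ > 0, and let g : ℝ → ℝ satisfy c₁|s|^κ ≤ |g(s)| ≤ c₂|s|^κ and g(s)s ≥ 0 for all |s| < 1. Define φ(s) = c₁^{−2κ/(κ+1)}(1 + c₂²) s^{2κ/(κ+1)} for s ≥ 0. Then φ(g(s)·s) ≥ |g(s)|² + s² for all |s| < 1. -/
/-!
With `θ = 2κ/(κ+1)` and `t = |s|`, the sign condition gives `g(s)s = |g(s)| t ≥ c₁ t^(κ+1)`, so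
`c₁^(-θ) (g(s)s)^θ ≥ t^(2κ)`. Both terms on the right are at most multiples of `t^(2κ)`:
`|g(s)|² ≤ c₂² t^(2κ)` by the upper growth bound, and `s² ≤ t^(2κ)` because `t ≤ 1` and `2κ ≤ 2`.
-/

open Real

lemma mul_abs_rpow_add_one_le_mul {x y c κ : ℝ} (hκ : 0 ≤ κ) (hxy : 0 ≤ x * y)
    (h : c * |y| ^ κ ≤ |x|) : c * |y| ^ (κ + 1) ≤ x * y := by
  rw [rpow_add' (abs_nonneg y) (by linarith), rpow_one, ← mul_assoc, ← abs_of_nonneg hxy,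
    abs_mul]
  exact mul_le_mul_of_nonneg_right h (abs_nonneg y)

lemma rpow_le_rpow_neg_mul_rpow_of_mul_rpow_le {c t u p q : ℝ} (hc : 0 < c) (ht : 0 ≤ t)
    (hp : 0 < p) (hq : 0 ≤ q) (h : c * t ^ p ≤ u) : t ^ q ≤ c ^ (-(q / p)) * u ^ (q / p) := by
  have hcu : c ^ (q / p) * t ^ q ≤ u ^ (q / p) :=
    calc c ^ (q / p) * t ^ q = (c * t ^ p) ^ (q / p) := by
          rw [mul_rpow hc.le (rpow_nonneg ht p), ← rpow_mul ht, mul_div_cancel₀ q hp.ne']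
      _ ≤ u ^ (q / p) := rpow_le_rpow (by positivity) h (div_nonneg hq hp.le)
  rw [rpow_neg hc.le, ← div_eq_inv_mul, le_div_iff₀' (rpow_pos_of_pos hc _)]
  exact hcu

lemma sq_le_mul_abs_rpow_two_mul {x y c κ : ℝ} (h : |x| ≤ c * |y| ^ κ) :
    |x| ^ 2 ≤ c ^ 2 * |y| ^ (2 * κ) := by
  calc |x| ^ 2 ≤ (c * |y| ^ κ) ^ 2 := pow_le_pow_left₀ (abs_nonneg x) h 2
    _ = c ^ 2 * |y| ^ (2 * κ) := by
      rw [mul_pow, mul_comm 2 κ, ← rpow_mul_natCast (abs_nonneg y) κ 2, Nat.cast_ofNat]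

lemma sq_le_abs_rpow {s p : ℝ} (hs : |s| ≤ 1) (hp : 0 ≤ p) (hp2 : p ≤ 2) : s ^ 2 ≤ |s| ^ p := by
  calc s ^ 2 = |s| ^ (2 : ℝ) := by rw [rpow_two, sq_abs]
    _ ≤ |s| ^ p := rpow_le_rpow_of_exponent_ge' (abs_nonneg s) hs hp hp2

theorem concave_majorant_sublinear_general
    (g : ℝ → ℝ) (κ c₁ c₂ : ℝ) (hκ0 : 0 < κ) (hκ1 : κ < 1) (hc₁ : 0 < c₁)
    (hsign : ∀ s : ℝ, |s| < 1 → 0 ≤ g s * s)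
    (hlow : ∀ s : ℝ, |s| < 1 → c₁ * |s| ^ κ ≤ |g s|)
    (hup : ∀ s : ℝ, |s| < 1 → |g s| ≤ c₂ * |s| ^ κ) :
    ∀ s : ℝ, |s| < 1 →
      c₁ ^ (-(2 * κ / (κ + 1))) * (1 + c₂ ^ 2) * (g s * s) ^ (2 * κ / (κ + 1)) ≥
        |g s| ^ 2 + s ^ 2 := by
  intro s hs
  have hprod : |s| ^ (2 * κ) ≤ c₁ ^ (-(2 * κ / (κ + 1))) * (g s * s) ^ (2 * κ / (κ + 1)) :=
    rpow_le_rpow_neg_mul_rpow_of_mul_rpow_le hc₁ (abs_nonneg s) (by linarith) (by linarith)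
      (mul_abs_rpow_add_one_le_mul hκ0.le (hsign s hs) (hlow s hs))
  have hg : |g s| ^ 2 ≤ c₂ ^ 2 * |s| ^ (2 * κ) := sq_le_mul_abs_rpow_two_mul (hup s hs)
  have hs2 : s ^ 2 ≤ |s| ^ (2 * κ) := sq_le_abs_rpow hs.le (by linarith) (by linarith)
  calc |g s| ^ 2 + s ^ 2 ≤ (1 + c₂ ^ 2) * |s| ^ (2 * κ) := by linarith
    _ ≤ (1 + c₂ ^ 2) * (c₁ ^ (-(2 * κ / (κ + 1))) * (g s * s) ^ (2 * κ / (κ + 1))) :=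
      mul_le_mul_of_nonneg_left hprod (by positivity)
    _ = c₁ ^ (-(2 * κ / (κ + 1))) * (1 + c₂ ^ 2) * (g s * s) ^ (2 * κ / (κ + 1)) := by ring

theorem concave_majorant_sublinear
    (g : ℝ → ℝ) (κ c₁ c₂ : ℝ) (hκ0 : 0 < κ) (hκ1 : κ < 1) (hc₁ : 0 < c₁) (hc₂ : 0 < c₂)
    (hsign : ∀ s : ℝ, |s| < 1 → 0 ≤ g s * s)
    (hlow : ∀ s : ℝ, |s| < 1 → c₁ * |s| ^ κ ≤ |g s|)
    (hup : ∀ s : ℝ, |s| < 1 → |g s| ≤ c₂ * |s| ^ κ) :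
    ∀ s : ℝ, |s| < 1 →
      c₁ ^ (-(2 * κ / (κ + 1))) * (1 + c₂ ^ 2) * (g s * s) ^ (2 * κ / (κ + 1)) ≥
        |g s| ^ 2 + s ^ 2 :=
  concave_majorant_sublinear_general g κ c₁ c₂ hκ0 hκ1 hc₁ hsign hlow hup
end

section
/- Let Φ̃ : [0,∞) → [0,∞) be strictly increasing, continuous, with Φ̃(0) = 0, and suppose a sequence (Eₘ)ₘ≥0 of nonnegative reals satisfies Eₘ₊₁ + Φ̃⁻¹(Eₘ₊₁) ≤ Eₘ for all m ≥ 0. If σ : [0,∞) → [0,∞) solves σ'(t) + (I + Φ̃)⁻¹(σ(t)) = 0 with σ(0) = E₀, and σ is non-increasing, then Eₘ ≤ σ(m) for all m ∈ ℕ. -/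
open Real Set

/-- Lasiecka–Tataru iteration lemma: if `E (m+1) + Φ̃⁻¹ (E (m+1)) ≤ E m`
and `σ` solves `σ' + (I + Φ̃)⁻¹ σ = 0`, `σ 0 = E 0`, with σ non-increasing,
then `E m ≤ σ m`. Here `Ψ` plays the role of `Φ̃⁻¹` and `Ξ` the role of
`(I + Φ̃)⁻¹` on `[0, ∞)`. -/
theorem lasiecka_tataru_iteration
    (Φ : ℝ → ℝ) (Ψ Ξ : ℝ → ℝ) (E : ℕ → ℝ) (σ : ℝ → ℝ)
    (hΦmono : StrictMonoOn Φ (Ici 0))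
    (hΦcont : ContinuousOn Φ (Ici 0))
    (hΦ0 : Φ 0 = 0)
    (hΦmap : ∀ s : ℝ, 0 ≤ s → 0 ≤ Φ s)
    -- Ψ is the inverse of Φ on [0, ∞)
    (hΨmap : ∀ s : ℝ, 0 ≤ s → 0 ≤ Ψ s)
    (hΨΦ : ∀ s : ℝ, 0 ≤ s → Ψ (Φ s) = s)
    (hΦΨ : ∀ s : ℝ, 0 ≤ s → Φ (Ψ s) = s)
    -- Ξ is the inverse of (I + Φ) on [0, ∞)
    (hΞmap : ∀ s : ℝ, 0 ≤ s → 0 ≤ Ξ s)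
    (hΞIΦ : ∀ s : ℝ, 0 ≤ s → Ξ (s + Φ s) = s)
    (hIΦΞ : ∀ s : ℝ, 0 ≤ s → Ξ s + Φ (Ξ s) = s)
    (hEnonneg : ∀ m : ℕ, 0 ≤ E m)
    (hrec : ∀ m : ℕ, E (m + 1) + Ψ (E (m + 1)) ≤ E m)
    (hσnonneg : ∀ t : ℝ, 0 ≤ t → 0 ≤ σ t)
    (hσode : ∀ t : ℝ, 0 ≤ t → HasDerivAt σ (-(Ξ (σ t))) t)
    (hσ0 : σ 0 = E 0)
    (hσdec : ∀ s t : ℝ, 0 ≤ s → s ≤ t → σ t ≤ σ s) :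
    ∀ m : ℕ, E m ≤ σ m := by
  -- Ξ is monotone on [0, ∞)
  have hΞmono : ∀ a b : ℝ, 0 ≤ a → a ≤ b → Ξ a ≤ Ξ b := by
    intro a b ha hab
    by_contra h
    push_neg at h
    have hb : (0:ℝ) ≤ b := ha.trans hab
    have h1 : Φ (Ξ b) < Φ (Ξ a) := hΦmono (hΞmap b hb) (hΞmap a ha) h
    have : b < a := by
      calc b = Ξ b + Φ (Ξ b) := (hIΦΞ b hb).symm
        _ < Ξ a + Φ (Ξ a) := by linarith
        _ = a := hIΦΞ a ha
    linarith
  intro m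
  induction m with
  | zero => simpa using hσ0.ge
  | succ m ih =>
    have hm0 : (0:ℝ) ≤ (m:ℝ) := Nat.cast_nonneg m
    -- key ODE comparison: σ (m+1) ≥ σ m - Ξ (σ m)
    have hstep : σ m - Ξ (σ m) ≤ σ (m + 1) := by
      set f : ℝ → ℝ := fun t => σ t + Ξ (σ m) * t with hf
      have hderiv : ∀ t : ℝ, 0 ≤ t → HasDerivAt f (-(Ξ (σ t)) + Ξ (σ m)) t := by
        intro t ht
        have h := (hσode t ht).add ((hasDerivAt_id t).const_mul (Ξ (σ m)))
        rw [mul_one] at h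
        exact h
      have hmono : MonotoneOn f (Icc (m:ℝ) (m+1)) := by
        apply monotoneOn_of_deriv_nonneg (convex_Icc _ _)
        · intro t ht
          exact ((hderiv t (hm0.trans ht.1)).continuousAt).continuousWithinAt
        · intro t ht
          rw [interior_Icc] at ht
          exact ((hderiv t (hm0.trans ht.1.le)).differentiableAt).differentiableWithinAt
        · intro t ht
          rw [interior_Icc] at ht
          have ht0 : (0:ℝ) ≤ t := hm0.trans ht.1.le
          rw [(hderiv t ht0).deriv]
          have h1 : σ t ≤ σ m := hσdec m t hm0 ht.1.le
          have h2 : Ξ (σ t) ≤ Ξ (σ m) := hΞmono _ _ (hσnonneg t ht0) h1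
          linarith
      have := hmono (left_mem_Icc.2 (by linarith)) (right_mem_Icc.2 (by linarith))
        (by linarith : (m:ℝ) ≤ m + 1)
      simp only [hf] at this
      push_cast
      ring_nf
      ring_nf at this
      linarith
    -- algebraic comparison
    have hA0 : (0:ℝ) ≤ E (m+1) + Ψ (E (m+1)) :=
      add_nonneg (hEnonneg (m+1)) (hΨmap _ (hEnonneg (m+1)))
    have hAB : E (m+1) + Ψ (E (m+1)) ≤ σ m := (hrec m).trans ih
    have hσm0 : (0:ℝ) ≤ σ m := hσnonneg m hm0
    -- Ξ (E(m+1) + Ψ(E(m+1))) = Ψ (E(m+1))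
    have hΞA : Ξ (E (m+1) + Ψ (E (m+1))) = Ψ (E (m+1)) := by
      have := hΞIΦ (Ψ (E (m+1))) (hΨmap _ (hEnonneg (m+1)))
      rwa [hΦΨ _ (hEnonneg (m+1)), add_comm] at this
    have hΞle : Ξ (E (m+1) + Ψ (E (m+1))) ≤ Ξ (σ m) := hΞmono _ _ hA0 hAB
    have hΦle : Φ (Ξ (E (m+1) + Ψ (E (m+1)))) ≤ Φ (Ξ (σ m)) := by
      rcases eq_or_lt_of_le hΞle with h | h
      · rw [h]
      · exact (hΦmono (hΞmap _ hA0) (hΞmap _ hσm0) h).le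
    have hE1 : E (m+1) = Φ (Ξ (E (m+1) + Ψ (E (m+1)))) := by
      rw [hΞA, hΦΨ _ (hEnonneg (m+1))]
    have hσm : σ m - Ξ (σ m) = Φ (Ξ (σ m)) := by
      have := hIΦΞ (σ m) hσm0; linarith
    have : E (m+1) ≤ σ m - Ξ (σ m) := by rw [hE1, hσm]; exact hΦle
    push_cast
    linarith
end
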